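/- arXiv:1001.4040 — 5 statements merged into one kernel-verified Lean document; each statement's English description precedes it below -/
import Mathlib

section
/- Let F be a 2d×2d Hermitian invertible matrix with d×d blocks F = [[F11,F12],[F12*,F22]], F22 positive definite, and suppose F J F' = −J where F' = [[F11',F12'],[F12'*,F22']] is another Hermitian matrix with F22' positive definite, and J = [[0,−I_d],[I_d,0]]. Then F12 F22⁻¹ F12* − F11 = (F22')⁻¹; in particular F12 F22⁻¹ F12* − F11 is positive definite. -/
open Matrix
open scoped ComplexOrder

theorem stmt4 (d : ℕ) (F11 F12 F22 F11' F12' F22' : Matrix (Fin d) (Fin d) ℂ)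
    (J : Matrix (Fin d ⊕ Fin d) (Fin d ⊕ Fin d) ℂ)
    (hJ : J = Matrix.fromBlocks 0 (-1) 1 0)
    (h11 : F11.IsHermitian) (h22 : F22.PosDef)
    (h11' : F11'.IsHermitian) (h22' : F22'.PosDef)
    (F F' : Matrix (Fin d ⊕ Fin d) (Fin d ⊕ Fin d) ℂ)
    (hF : F = Matrix.fromBlocks F11 F12 F12ᴴ F22)
    (hF' : F' = Matrix.fromBlocks F11' F12' F12'ᴴ F22')
    (hFinv : IsUnit F)
    (hrel : F * J * F' = -J) :
    F12 * F22⁻¹ * F12ᴴ - F11 = F22'⁻¹ ∧ (F12 * F22⁻¹ * F12ᴴ - F11).PosDef := by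
  subst hF hF' hJ
  rw [Matrix.fromBlocks_multiply, Matrix.fromBlocks_multiply,
    show (-(Matrix.fromBlocks 0 (-1) 1 0 : Matrix (Fin d ⊕ Fin d) (Fin d ⊕ Fin d) ℂ))
      = Matrix.fromBlocks 0 1 (-1) 0 by simp [Matrix.fromBlocks_neg],
    Matrix.fromBlocks_inj] at hrel
  obtain ⟨_, h2, _, h4⟩ := hrel
  simp only [Matrix.mul_one, Matrix.mul_zero,  
    Matrix.mul_neg, Matrix.mul_one, Matrix.neg_mul, zero_add, add_zero, mul_one, mul_zero,
    mul_neg, neg_mul] at h2 h4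
  rw [← sub_eq_add_neg] at h2
  rw [← sub_eq_add_neg, sub_eq_zero] at h4
  have h2' := h2
  have h4' := h4
  have hdet : IsUnit F22.det := (Matrix.isUnit_iff_isUnit_det _).mp h22.isUnit
  have hF12' : F12' = F22⁻¹ * (F12ᴴ * F22') := by
    rw [← h4', ← mul_assoc, Matrix.nonsing_inv_mul _ hdet, one_mul]
  have key : (F12 * F22⁻¹ * F12ᴴ - F11) * F22' = 1 := by
    rw [sub_mul, mul_assoc, mul_assoc, ← hF12']
    exact h2'
  have hinv : F22'⁻¹ = F12 * F22⁻¹ * F12ᴴ - F11 := Matrix.inv_eq_left_inv key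
  exact ⟨hinv.symm, hinv ▸ h22'.inv⟩
end

section
/- Let R and R' be d×d positive definite Hermitian matrices, C a d×d matrix, and M a d×d matrix. Then (M − C)* R⁻¹ (M − C) = (R')² holds if and only if there exists a unitary d×d matrix U such that M = C + R^{1/2} U R', where R^{1/2} is the positive definite square root of R. -/
open Matrix
open scoped ComplexOrder
open scoped MatrixOrder

/-!
With `S = R^{1/2}`, Hermitian and invertible, `(M - C)ᴴ R⁻¹ (M - C) = (S⁻¹ X)ᴴ (S⁻¹ X)` for
`X = M - C`, and `R' R' = R'ᴴ R'`. For square matrices and invertible `P`, `Yᴴ Y = Pᴴ P` holds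
exactly when `Y P⁻¹` is unitary, since a one-sided inverse of a square matrix is two-sided.
-/

namespace Matrix

variable {n α : Type*} [Fintype n] [DecidableEq n] [CommRing α] [StarRing α]

theorem conjTranspose_mul_self_eq_iff_exists_unitary {X P : Matrix n n α} (hP : IsUnit P) :
    Xᴴ * X = Pᴴ * P ↔ ∃ U ∈ unitaryGroup n α, X = U * P := by
  have hPdet : IsUnit P.det := (isUnit_iff_isUnit_det P).mp hP
  constructor
  · intro h
    refine ⟨X * P⁻¹, mem_unitaryGroup_iff'.mpr ?_,
      by rw [mul_assoc, nonsing_inv_mul P hPdet, mul_one]⟩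
    calc star (X * P⁻¹) * (X * P⁻¹) = (P⁻¹)ᴴ * (Xᴴ * X) * P⁻¹ := by
          rw [star_eq_conjTranspose, conjTranspose_mul]; noncomm_ring
      _ = (P * P⁻¹)ᴴ * (P * P⁻¹) := by rw [h, conjTranspose_mul]; noncomm_ring
      _ = 1 := by rw [mul_nonsing_inv P hPdet, conjTranspose_one, one_mul]
  · rintro ⟨U, hU, rfl⟩
    have hUU : Uᴴ * U = 1 := mem_unitaryGroup_iff'.mp hU
    rw [conjTranspose_mul, mul_assoc, ← mul_assoc Uᴴ, hUU, one_mul]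

theorem IsHermitian.conjTranspose_mul_inv_mul_self_mul {S : Matrix n n α} (hS : S.IsHermitian)
    (X : Matrix n n α) : Xᴴ * (S * S)⁻¹ * X = (S⁻¹ * X)ᴴ * (S⁻¹ * X) := by
  rw [mul_inv_rev, conjTranspose_mul, conjTranspose_nonsing_inv, hS.eq, mul_assoc, mul_assoc,
    mul_assoc]

end Matrix

theorem stmt5 (d : ℕ) (R R' C M : Matrix (Fin d) (Fin d) ℂ)
    (hR : R.PosDef) (hR' : R'.PosDef) :
    (M - C)ᴴ * R⁻¹ * (M - C) = R' * R' ↔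
      ∃ U : Matrix (Fin d) (Fin d) ℂ, U ∈ Matrix.unitaryGroup (Fin d) ℂ ∧
        M = C + CFC.sqrt R * U * R' := by
  set S := CFC.sqrt R
  have hS : S.PosDef := hR.isStrictlyPositive.sqrt.posDef
  have : Invertible S := hS.isUnit.invertible
  rw [← CFC.sqrt_mul_sqrt_self R hR.posSemidef.nonneg,
    hS.isHermitian.conjTranspose_mul_inv_mul_self_mul]
  nth_rw 1 [← hR'.isHermitian.eq]
  rw [conjTranspose_mul_self_eq_iff_exists_unitary hR'.isUnit]
  refine exists_congr fun U => and_congr_right fun _ => ?_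
  rw [inv_mul_eq_iff_eq_mul_of_invertible, sub_eq_iff_eq_add', mul_assoc]
end

section
/- Let J = [[0,−I_d],[I_d,0]] and suppose Y is a 2d×2d matrix with Y*JY = J, blocked as Y = (θ, φ) with 2d×d blocks θ, φ. Let β be a d×2d matrix with rank β = d, ββ* = I_d, βJβ* = 0, and suppose βφ is invertible. Define M = −(βφ)⁻¹(βθ) and χ = θ + φM. Then χ* J χ = 0. -/
/-!
Since `β βᴴ = 1` and `β J βᴴ = 0`, the rows of `β` and of `β Jᴴ` together form an orthonormal
basis: the square matrix `fromRows β (β Jᴴ)` is unitary, so `βᴴ β + J βᴴ β Jᴴ = 1`.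
Applied to `χ` with `β χ = 0` this gives `χ = J βᴴ (β Jᴴ χ)`, hence, using `J² = -1`,
`χᴴ J χ = -(β χ)ᴴ (β Jᴴ χ) = 0`. That `β χ = 0` is immediate from the definition of `M`.
-/

open Matrix

namespace Matrix

variable {m k R : Type*} [DecidableEq m] [CommRing R] [StarRing R]

theorem conjTranspose_J : (J m R)ᴴ = -J m R := by
  simp [J, fromBlocks_conjTranspose, fromBlocks_neg]

variable [Fintype m]

theorem conjTranspose_J_mul_J : (J m R)ᴴ * J m R = 1 := by
  rw [conjTranspose_J, Matrix.neg_mul, J_squared, neg_neg]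

theorem conjTranspose_mul_add_mul_conjTranspose_eq_one (β : Matrix m (m ⊕ m) R)
    (J : Matrix (m ⊕ m) (m ⊕ m) R) (hJ : Jᴴ * J = 1) (hβ : β * βᴴ = 1)
    (hβJ : β * J * βᴴ = 0) :
    βᴴ * β + J * βᴴ * β * Jᴴ = 1 := by
  have hβJ' : β * Jᴴ * βᴴ = 0 := by
    simpa [Matrix.mul_assoc] using congrArg conjTranspose hβJ
  have hU : fromRows β (β * Jᴴ) * (fromRows β (β * Jᴴ))ᴴ = 1 := by
    rw [conjTranspose_fromRows_eq_fromCols_conjTranspose, fromRows_mul_fromCols,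
      ← fromBlocks_one]
    have h₁₂ : β * (β * Jᴴ)ᴴ = 0 := by simpa [Matrix.mul_assoc] using hβJ
    have h₂₂ : β * Jᴴ * (β * Jᴴ)ᴴ = 1 := by
      simp only [conjTranspose_mul, conjTranspose_conjTranspose, Matrix.mul_assoc]
      rw [← Matrix.mul_assoc Jᴴ, hJ, Matrix.one_mul, hβ]
    rw [hβ, h₁₂, hβJ', h₂₂]
  rw [mul_eq_one_comm, conjTranspose_fromRows_eq_fromCols_conjTranspose,
    fromCols_mul_fromRows] at hU
  simpa [Matrix.mul_assoc] using hU

theorem conjTranspose_mul_J_mul_eq_zero (β : Matrix m (m ⊕ m) R) (χ : Matrix (m ⊕ m) k R)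
    (hβ : β * βᴴ = 1) (hβJ : β * J m R * βᴴ = 0) (hβχ : β * χ = 0) :
    χᴴ * J m R * χ = 0 := by
  have hχ : χ = J m R * βᴴ * (β * ((J m R)ᴴ * χ)) := by
    calc χ = (βᴴ * β + J m R * βᴴ * β * (J m R)ᴴ) * χ := by
          rw [conjTranspose_mul_add_mul_conjTranspose_eq_one β _ conjTranspose_J_mul_J hβ hβJ,
            Matrix.one_mul]
      _ = J m R * βᴴ * (β * ((J m R)ᴴ * χ)) := by
          simp only [Matrix.add_mul, Matrix.mul_assoc, hβχ, Matrix.mul_zero, zero_add]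
  calc χᴴ * J m R * χ = χᴴ * J m R * (J m R * βᴴ * (β * ((J m R)ᴴ * χ))) := by rw [← hχ]
    _ = -((β * χ)ᴴ * (β * ((J m R)ᴴ * χ))) := by
        simp only [conjTranspose_mul, ← Matrix.mul_assoc, Matrix.mul_assoc χᴴ (J m R), J_squared]
        simp only [Matrix.mul_neg, Matrix.mul_one, Matrix.neg_mul]
    _ = 0 := by rw [hβχ, conjTranspose_zero, Matrix.zero_mul, neg_zero]

end Matrix

theorem stmt13_general (d : ℕ) (θ φ : Matrix (Fin d ⊕ Fin d) (Fin d) ℂ)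
    (J : Matrix (Fin d ⊕ Fin d) (Fin d ⊕ Fin d) ℂ)
    (hJ : J = Matrix.fromBlocks 0 (-1) 1 0)
    (β : Matrix (Fin d) (Fin d ⊕ Fin d) ℂ)
    (hβ : β * βᴴ = 1) (hβJ : β * J * βᴴ = 0)
    (hinv : IsUnit (β * φ))
    (M : Matrix (Fin d) (Fin d) ℂ) (χ : Matrix (Fin d ⊕ Fin d) (Fin d) ℂ)
    (hM : M = -((β * φ)⁻¹ * (β * θ)))
    (hχ : χ = θ + φ * M) :
    χᴴ * J * χ = 0 := by
  have hβχ : β * χ = 0 := by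
    rw [hχ, hM, Matrix.mul_add, ← Matrix.mul_assoc, Matrix.mul_neg, ← Matrix.mul_assoc,
      mul_nonsing_inv _ ((isUnit_iff_isUnit_det _).mp hinv), Matrix.one_mul, add_neg_cancel]
  subst hJ
  exact conjTranspose_mul_J_mul_eq_zero β χ hβ hβJ hβχ

theorem stmt13 (d : ℕ) (θ φ : Matrix (Fin d ⊕ Fin d) (Fin d) ℂ)
    (J : Matrix (Fin d ⊕ Fin d) (Fin d ⊕ Fin d) ℂ)
    (hJ : J = Matrix.fromBlocks 0 (-1) 1 0)
    (hY : (Matrix.fromCols θ φ)ᴴ * J * Matrix.fromCols θ φ = J)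
    (β : Matrix (Fin d) (Fin d ⊕ Fin d) ℂ)
    (hrankβ : β.rank = d) (hβ : β * βᴴ = 1) (hβJ : β * J * βᴴ = 0)
    (hinv : IsUnit (β * φ))
    (M : Matrix (Fin d) (Fin d) ℂ) (χ : Matrix (Fin d ⊕ Fin d) (Fin d) ℂ)
    (hM : M = -((β * φ)⁻¹ * (β * θ)))
    (hχ : χ = θ + φ * M) :
    χᴴ * J * χ = 0 :=
  stmt13_general d θ φ J hJ β hβ hβJ hinv M χ hM hχ
end

section
/- Let A, B, C, W₁, W₂ be d×d complex matrices with B, C, W₁, W₂ Hermitian and W₁, W₂ ≥ 0, let λ ∈ ℂ, let ν ∈ ℝ, and assume E := (I_d − νA)⁻¹ exists. Define S := [[A − ν(B+λW₂)E*(C−λW₁), (B+λW₂)E*],[E*(C−λW₁), −E*A*]]. Then S*(with λ replaced by conj(λ))·J + J·S = ν·S*(conj λ)·J·S, where J = [[0,−I_d],[I_d,0]] and S*(conj λ) denotes the conjugate transpose of the matrix S formed with λ̄ in place of λ. -/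
open Matrix
open scoped ComplexOrder

theorem stmt15 (d : ℕ) (A B C W₁ W₂ : Matrix (Fin d) (Fin d) ℂ)
    (hB : B.IsHermitian) (hC : C.IsHermitian)
    (hW₁ : W₁.PosSemidef) (hW₂ : W₂.PosSemidef)
    (ν : ℝ) (hE : IsUnit (1 - (ν : ℂ) • A))
    (E : Matrix (Fin d) (Fin d) ℂ) (hEdef : E = (1 - (ν : ℂ) • A)⁻¹)
    (S : ℂ → Matrix (Fin d ⊕ Fin d) (Fin d ⊕ Fin d) ℂ)
    (hS : S = fun z => Matrix.fromBlocks
      (A - (ν : ℂ) • ((B + z • W₂) * Eᴴ * (C - z • W₁)))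
      ((B + z • W₂) * Eᴴ)
      (Eᴴ * (C - z • W₁))
      (-(Eᴴ * Aᴴ)))
    (J : Matrix (Fin d ⊕ Fin d) (Fin d ⊕ Fin d) ℂ)
    (hJ : J = Matrix.fromBlocks 0 (-1) 1 0)
    (lam : ℂ) :
    (S (starRingEnd ℂ lam))ᴴ * J + J * S lam =
      (ν : ℂ) • ((S (starRingEnd ℂ lam))ᴴ * J * S lam) := by
  set k : ℂ := (ν : ℂ) with hk
  have hdet : IsUnit (1 - k • A).det := (Matrix.isUnit_iff_isUnit_det _).mp hE
  have h1 : E * (1 - k • A) = 1 := by rw [hEdef]; exact Matrix.nonsing_inv_mul _ hdet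
  have h2 : (1 - k • A) * E = 1 := by rw [hEdef]; exact Matrix.mul_nonsing_inv _ hdet
  have hEA : k • (E * A) = E - 1 := by
    rw [mul_sub, mul_one, Matrix.mul_smul] at h1
    rw [eq_sub_iff_add_eq, ← h1]; abel
  have hAE : k • (A * E) = E - 1 := by
    rw [sub_mul, one_mul, Matrix.smul_mul] at h2
    rw [eq_sub_iff_add_eq, ← h2]; abel
  have hsk : star k = k := by rw [hk]; exact Complex.conj_ofReal ν
  have hEA' : k • (Eᴴ * Aᴴ) = Eᴴ - 1 := by
    have := congrArg Matrix.conjTranspose hAE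
    simpa [Matrix.conjTranspose_smul, Matrix.conjTranspose_mul, hsk] using this
  have hAE' : k • (Aᴴ * Eᴴ) = Eᴴ - 1 := by
    have := congrArg Matrix.conjTranspose hEA
    simpa [Matrix.conjTranspose_smul, Matrix.conjTranspose_mul, hsk] using this
  subst hS hJ
  simp only
  rw [Matrix.fromBlocks_conjTranspose]
  simp only [Matrix.conjTranspose_sub, Matrix.conjTranspose_add, Matrix.conjTranspose_mul,
    Matrix.conjTranspose_smul, Matrix.conjTranspose_neg, Matrix.conjTranspose_conjTranspose,
    hB.eq, hC.eq, hW₁.1.eq, hW₂.1.eq, hsk, starRingEnd_apply, star_star]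
  set f : Matrix (Fin d) (Fin d) ℂ := C - lam • W₁ with hf
  set g : Matrix (Fin d) (Fin d) ℂ := B + lam • W₂ with hg
  have f1a : k • (f * (E * A)) = f * E - f := by
    rw [← mul_smul_comm, hEA, mul_sub, mul_one]
  have f1b : k • (Aᴴ * (Eᴴ * f)) = Eᴴ * f - f := by
    rw [← mul_assoc, ← smul_mul_assoc, hAE', sub_mul, one_mul]
  have f2a : k • (Aᴴ * (Eᴴ * Aᴴ)) = Eᴴ * Aᴴ - Aᴴ := by
    rw [← mul_assoc, ← smul_mul_assoc, hAE', sub_mul, one_mul]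
  have f2b : (k * k) • (f * (E * (g * (Eᴴ * Aᴴ)))) =
      k • (f * (E * (g * Eᴴ))) - k • (f * (E * g)) := by
    have h : k • (g * (Eᴴ * Aᴴ)) = g * Eᴴ - g := by
      rw [← mul_smul_comm, hEA', mul_sub, mul_one]
    calc (k * k) • (f * (E * (g * (Eᴴ * Aᴴ))))
        = k • (f * (E * (k • (g * (Eᴴ * Aᴴ))))) := by
          rw [mul_smul_comm, mul_smul_comm, smul_smul]
      _ = _ := by rw [h, mul_sub, mul_sub, smul_sub]
  have f3a : k • (A * (E * A)) = A * E - A := by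
    rw [← mul_smul_comm, hEA, mul_sub, mul_one]
  have f3b : (k * k) • (A * (E * (g * (Eᴴ * f)))) =
      k • (E * (g * (Eᴴ * f))) - k • (g * (Eᴴ * f)) := by
    rw [mul_smul, ← mul_assoc, ← smul_mul_assoc, hAE, sub_mul, one_mul, smul_sub]
  have f4a : k • (A * (E * (g * Eᴴ))) = E * (g * Eᴴ) - g * Eᴴ := by
    rw [← mul_assoc, ← smul_mul_assoc, hAE, sub_mul, one_mul]
  have f4b : k • (E * (g * (Eᴴ * Aᴴ))) = E * (g * Eᴴ) - E * g := by
    rw [← mul_smul_comm, ← mul_smul_comm, hEA', mul_sub, mul_one, mul_sub]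
  rw [Matrix.fromBlocks_multiply, Matrix.fromBlocks_multiply, Matrix.fromBlocks_multiply,
    Matrix.fromBlocks_add, Matrix.fromBlocks_smul, Matrix.fromBlocks_inj]
  refine ⟨?_, ?_, ?_, ?_⟩ <;>
    simp only [zero_mul, mul_zero, mul_one, one_mul, neg_mul, mul_neg, neg_neg, add_zero,
      zero_add, smul_zero, sub_zero, neg_zero, sub_mul, mul_sub, smul_sub, smul_add, smul_neg,
      mul_smul_comm, smul_mul_assoc, smul_smul, mul_assoc]
  · rw [f1a, f1b]; abel
  · rw [f2a, f2b]; abel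
  · rw [f3a, f3b]; abel
  · rw [f4a, f4b]; abel
end

section
/- Let M be a d×d complex matrix, F a 2d×2d Hermitian matrix with blocks [[F11,F12],[F12*,F22]], F22 > 0, and suppose (I_d, M*) F (I_d; M) ≤ 0 (negative semidefinite). If additionally F12 F22⁻¹ F12* − F11 is positive definite, then with 𝒞 := −F22⁻¹F12* and 𝒭 := F22^{-1/2}, 𝒭' := (F12F22⁻¹F12* − F11)^{1/2}, there exists V with V*V ≤ I_d such that M = 𝒞 + 𝒭 V 𝒭'. -/
/-!
Completing the square in the Hermitian form `(1, Mᴴ) F (1; M)` rewrites the Weyl disk condition as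
`(M - 𝒞)ᴴ F₂₂ (M - 𝒞) ≤ Δ` with `Δ = F₁₂ F₂₂⁻¹ F₁₂ᴴ - F₁₁`. Writing `F₂₂ = 𝒭⁻²` and `Δ = 𝒭'²`,
conjugation by `𝒭'⁻¹` turns this into `VᴴV ≤ 1` for `V = 𝒭⁻¹ (M - 𝒞) 𝒭'⁻¹`.
-/

open Matrix
open scoped ComplexOrder MatrixOrder

namespace Matrix

lemma fromCols_mul_fromBlocks_mul_fromRows {l m₁ m₂ n₁ n₂ k R : Type*} [Fintype m₁] [Fintype m₂]
    [Fintype n₁] [Fintype n₂] [Semiring R]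
    (A₁ : Matrix l m₁ R) (A₂ : Matrix l m₂ R) (P₁₁ : Matrix m₁ n₁ R) (P₁₂ : Matrix m₁ n₂ R)
    (P₂₁ : Matrix m₂ n₁ R) (P₂₂ : Matrix m₂ n₂ R) (B₁ : Matrix n₁ k R) (B₂ : Matrix n₂ k R) :
    fromCols A₁ A₂ * fromBlocks P₁₁ P₁₂ P₂₁ P₂₂ * fromRows B₁ B₂ =
      A₁ * P₁₁ * B₁ + A₁ * P₁₂ * B₂ + (A₂ * P₂₁ * B₁ + A₂ * P₂₂ * B₂) := by
  rw [Matrix.mul_assoc, fromBlocks_mul_fromRows, fromCols_mul_fromRows]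
  simp only [Matrix.mul_add, Matrix.mul_assoc]

section CommRing

variable {m n R : Type*} [Fintype n] [DecidableEq n] [CommRing R] [StarRing R]

lemma add_mul_add_conjTranspose_add_eq_sub {P : Matrix m m R} {Q : Matrix m n R}
    {S : Matrix n n R} (X : Matrix n m R) (hS : S.IsHermitian) (hSu : IsUnit S.det) :
    P + Q * X + (Xᴴ * Qᴴ + Xᴴ * S * X) =
      (X + S⁻¹ * Qᴴ)ᴴ * S * (X + S⁻¹ * Qᴴ) - (Q * S⁻¹ * Qᴴ - P) := by
  simp only [conjTranspose_add, conjTranspose_mul, conjTranspose_conjTranspose, hS.inv.eq,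
    Matrix.add_mul, Matrix.mul_add, Matrix.mul_assoc, mul_nonsing_inv_cancel_left S _ hSu,
    nonsing_inv_mul_cancel_left S _ hSu]
  abel

lemma posSemidef_one_sub_conjTranspose_mul_self_mul_inv [Fintype m] [PartialOrder R]
    {X : Matrix m n R} {T : Matrix n n R} (hT : T.IsHermitian) (hTu : IsUnit T.det)
    (h : (T * T - Xᴴ * X).PosSemidef) : (1 - (X * T⁻¹)ᴴ * (X * T⁻¹)).PosSemidef := by
  convert h.conjTranspose_mul_mul_same T⁻¹ using 1
  simp only [conjTranspose_mul, conjTranspose_nonsing_inv, hT.eq, Matrix.mul_sub, Matrix.sub_mul,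
    Matrix.mul_assoc, mul_nonsing_inv _ hTu, nonsing_inv_mul_cancel_left _ _ hTu]

end CommRing

lemma PosSemidef.conjTranspose_mul_self_sqrt_mul {m n 𝕜 : Type*} [Fintype n] [DecidableEq n]
    [RCLike 𝕜]
    {A : Matrix n n 𝕜} (hA : A.PosSemidef) (X : Matrix n m 𝕜) :
    (CFC.sqrt A * X)ᴴ * (CFC.sqrt A * X) = Xᴴ * A * X := by
  rw [conjTranspose_mul, (CFC.sqrt_nonneg A).posSemidef.isHermitian.eq, Matrix.mul_assoc,
    ← Matrix.mul_assoc (CFC.sqrt A), CFC.sqrt_mul_sqrt_self A hA.nonneg, Matrix.mul_assoc]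

end Matrix

theorem stmt19_general (d : ℕ) (F11 F12 F22 M : Matrix (Fin d) (Fin d) ℂ)
    (h22 : F22.PosDef)
    (F : Matrix (Fin d ⊕ Fin d) (Fin d ⊕ Fin d) ℂ)
    (hF : F = Matrix.fromBlocks F11 F12 F12ᴴ F22)
    (hM : (-(Matrix.fromCols (1 : Matrix (Fin d) (Fin d) ℂ) Mᴴ * F * Matrix.fromRows (1 : Matrix (Fin d) (Fin d) ℂ) M)).PosSemidef)
    (hΔ : (F12 * F22⁻¹ * F12ᴴ - F11).PosDef) :
    ∃ V : Matrix (Fin d) (Fin d) ℂ, (1 - Vᴴ * V).PosSemidef ∧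
      M = -(F22⁻¹ * F12ᴴ) + (CFC.sqrt F22)⁻¹ * V * CFC.sqrt (F12 * F22⁻¹ * F12ᴴ - F11) := by
  set Δ := F12 * F22⁻¹ * F12ᴴ - F11
  set N := M + F22⁻¹ * F12ᴴ
  have hdisk : (Δ - Nᴴ * F22 * N).PosSemidef := by
    rwa [hF, fromCols_mul_fromBlocks_mul_fromRows, Matrix.one_mul, Matrix.one_mul, Matrix.mul_one,
      Matrix.mul_one, add_mul_add_conjTranspose_add_eq_sub M h22.isHermitian h22.det_pos.ne'.isUnit,
      neg_sub] at hM
  have hS : (CFC.sqrt F22).PosDef := (IsStrictlyPositive.sqrt F22 h22.isStrictlyPositive).posDef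
  have hT : (CFC.sqrt Δ).PosDef := (IsStrictlyPositive.sqrt Δ hΔ.isStrictlyPositive).posDef
  refine ⟨CFC.sqrt F22 * N * (CFC.sqrt Δ)⁻¹,
    posSemidef_one_sub_conjTranspose_mul_self_mul_inv hT.isHermitian hT.det_pos.ne'.isUnit ?_, ?_⟩
  · rwa [CFC.sqrt_mul_sqrt_self Δ hΔ.posSemidef.nonneg,
      h22.posSemidef.conjTranspose_mul_self_sqrt_mul]
  · rw [← Matrix.mul_assoc, nonsing_inv_mul_cancel_left _ _ hS.det_pos.ne'.isUnit,
      nonsing_inv_mul_cancel_right _ _ hT.det_pos.ne'.isUnit]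
    simp only [N, neg_add_eq_sub, add_sub_cancel_right]

theorem stmt19 (d : ℕ) (F11 F12 F22 M : Matrix (Fin d) (Fin d) ℂ)
    (h11 : F11.IsHermitian) (h22 : F22.PosDef)
    (F : Matrix (Fin d ⊕ Fin d) (Fin d ⊕ Fin d) ℂ)
    (hF : F = Matrix.fromBlocks F11 F12 F12ᴴ F22)
    (hM : (-(Matrix.fromCols (1 : Matrix (Fin d) (Fin d) ℂ) Mᴴ * F * Matrix.fromRows (1 : Matrix (Fin d) (Fin d) ℂ) M)).PosSemidef)
    (hΔ : (F12 * F22⁻¹ * F12ᴴ - F11).PosDef) :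
    ∃ V : Matrix (Fin d) (Fin d) ℂ, (1 - Vᴴ * V).PosSemidef ∧
      M = -(F22⁻¹ * F12ᴴ) + (CFC.sqrt F22)⁻¹ * V * CFC.sqrt (F12 * F22⁻¹ * F12ᴴ - F11) :=
  stmt19_general d F11 F12 F22 M h22 F hF hM hΔ
end
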